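/- arXiv:1805.08240 — 8 statements merged into one kernel-verified Lean document; each statement's English description precedes it below -/
import Mathlib

section
/- Let S and S̄ be invertible symmetric real n×n matrices with n ≥ 1. If the sets {X : SX + XᵀS = 0} and {X : S̄X + XᵀS̄ = 0} of matrices skew-symmetric with respect to S and with respect to S̄ coincide, then S̄ = λS for some nonzero real number λ. -/
open Matrix

theorem so_determines_metric_up_to_scalar (n : ℕ) (hn : 1 ≤ n)
    (S Sb : Matrix (Fin n) (Fin n) ℝ)
    (hS : IsUnit S) (hSb : IsUnit Sb) (hSsymm : S.IsSymm) (hSbsymm : Sb.IsSymm)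
    (h : {X : Matrix (Fin n) (Fin n) ℝ | S * X + Xᵀ * S = 0} =
         {X : Matrix (Fin n) (Fin n) ℝ | Sb * X + Xᵀ * Sb = 0}) :
    ∃ lam : ℝ, lam ≠ 0 ∧ Sb = lam • S := by
  haveI : NeZero n := ⟨Nat.one_le_iff_ne_zero.mp hn⟩
  have hSinv : S⁻¹ * S = 1 := nonsing_inv_mul S ((Matrix.isUnit_iff_isUnit_det S).mp hS)
  have hSSinv : S * S⁻¹ = 1 := mul_nonsing_inv S ((Matrix.isUnit_iff_isUnit_det S).mp hS)
  have hSinvT : S⁻¹ᵀ = S⁻¹ := by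
    rw [transpose_nonsing_inv, hSsymm]
  set M := Sb * S⁻¹ with hM
  have hMT : Mᵀ = S⁻¹ * Sb := by
    rw [hM, transpose_mul, hSinvT, hSbsymm]
  have key : ∀ A : Matrix (Fin n) (Fin n) ℝ, Aᵀ = -A → M * A = A * Mᵀ := by
    intro A hA
    have hXmem : S * (S⁻¹ * A) + (S⁻¹ * A)ᵀ * S = 0 := by
      rw [transpose_mul, hSinvT, ← mul_assoc, hSSinv, one_mul, mul_assoc, hSinv,
        mul_one, hA, add_neg_cancel]
    have hmem : Sb * (S⁻¹ * A) + (S⁻¹ * A)ᵀ * Sb = 0 := (Set.ext_iff.mp h _).mp hXmem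
    rw [transpose_mul, hSinvT, hA] at hmem
    rw [mul_assoc (-A), neg_mul, add_neg_eq_zero, ← mul_assoc Sb] at hmem
    rw [hM, hMT]
    exact hmem
  have entry : ∀ i j : Fin n, i ≠ j →
      M * (Matrix.single i j 1 - Matrix.single j i 1)
        = (Matrix.single i j 1 - Matrix.single j i 1) * Mᵀ := by
    intro i j hij
    apply key
    ext a b
    simp [Matrix.single, and_comm]
  have offdiag : ∀ i j : Fin n, i ≠ j → M j i = 0 := by
    intro i j hij
    have := congrFun (congrFun (entry i j hij) j) j
    simp [Matrix.sub_mul, Matrix.mul_sub, Matrix.mul_apply, Matrix.single,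
      Finset.sum_ite_eq, Finset.sum_ite_eq', hij, Ne.symm hij, transpose_apply] at this
    linarith
  have diag : ∀ i j : Fin n, M i i = M j j := by
    intro i j
    by_cases hij : i = j
    · rw [hij]
    · have := congrFun (congrFun (entry i j hij) i) j
      simp [Matrix.sub_mul, Matrix.mul_sub, Matrix.mul_apply, Matrix.single,
        Finset.sum_ite_eq, Finset.sum_ite_eq', hij, Ne.symm hij, transpose_apply] at this
      linarith
  set lam := M ⟨0, hn⟩ ⟨0, hn⟩ with hlam
  have hMscalar : M = lam • (1 : Matrix (Fin n) (Fin n) ℝ) := by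
    ext a b
    by_cases hab : a = b
    · subst hab
      simp [Matrix.one_apply, diag a ⟨0, hn⟩, hlam]
    · simp [Matrix.one_apply, hab, offdiag b a (Ne.symm hab)]
  have hMunit : IsUnit M := hSb.mul ((Matrix.isUnit_nonsing_inv_iff).mpr hS)
  have hlamne : lam ≠ 0 := by
    intro h0
    rw [h0, zero_smul] at hMscalar
    rw [hMscalar] at hMunit
    exact not_isUnit_zero hMunit
  refine ⟨lam, hlamne, ?_⟩
  have : M * S = lam • S := by rw [hMscalar, smul_mul, one_mul]
  rw [← this, hM, mul_assoc, hSinv, mul_one]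
end

section
/- Let S and S̄ be invertible symmetric real n×n matrices. If sym(S) = sym(S̄) where sym(T) = {X : TX = XᵀT}, then S̄ = λS for some nonzero real λ. -/
open Matrix

theorem sym_determines_metric_up_to_scalar (n : ℕ)
    (S Sb : Matrix (Fin n) (Fin n) ℝ)
    (hS : IsUnit S) (hSb : IsUnit Sb) (hSsymm : S.IsSymm) (hSbsymm : Sb.IsSymm)
    (h : {X : Matrix (Fin n) (Fin n) ℝ | S * X = Xᵀ * S} =
         {X : Matrix (Fin n) (Fin n) ℝ | Sb * X = Xᵀ * Sb}) :
    ∃ lam : ℝ, lam ≠ 0 ∧ Sb = lam • S := by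
  rcases Nat.eq_zero_or_pos n with hn | hn
  · subst hn
    exact ⟨1, one_ne_zero, by ext i _; exact i.elim0⟩
  have i0 : Fin n := ⟨0, hn⟩
  have hdet : IsUnit S.det := (Matrix.isUnit_iff_isUnit_det S).mp hS
  set M : Matrix (Fin n) (Fin n) ℝ := Sb * S⁻¹ with hMdef
  -- key: for symmetric Y, M * Y = Y * Mᵀ
  have key : ∀ Y : Matrix (Fin n) (Fin n) ℝ, Yᵀ = Y → M * Y = Y * Mᵀ := by
    intro Y hY
    have hmem : S⁻¹ * Y ∈ {X : Matrix (Fin n) (Fin n) ℝ | S * X = Xᵀ * S} := by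
      show S * (S⁻¹ * Y) = (S⁻¹ * Y)ᵀ * S
      rw [← mul_assoc, Matrix.mul_nonsing_inv S hdet, one_mul,
        Matrix.transpose_mul, Matrix.transpose_nonsing_inv, hSsymm, hY,
        mul_assoc, Matrix.nonsing_inv_mul S hdet, mul_one]
    rw [h] at hmem
    have hmem : Sb * (S⁻¹ * Y) = (S⁻¹ * Y)ᵀ * Sb := hmem
    rw [Matrix.transpose_mul, Matrix.transpose_nonsing_inv, hSsymm, hY] at hmem
    have : Mᵀ = S⁻¹ * Sb := by
      rw [hMdef, Matrix.transpose_mul, Matrix.transpose_nonsing_inv, hSsymm, hSbsymm]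
    rw [this, hMdef, mul_assoc]
    exact hmem.trans (mul_assoc _ _ _)
  have hMsymm : Mᵀ = M := by
    have := key 1 (Matrix.transpose_one)
    rwa [mul_one, one_mul, eq_comm] at this
  have key' : ∀ Y : Matrix (Fin n) (Fin n) ℝ, Yᵀ = Y → M * Y = Y * M := by
    intro Y hY; rw [key Y hY, hMsymm]
  -- off-diagonal entries of M vanish
  have hoff : ∀ i j : Fin n, i ≠ j → M i j = 0 := by
    intro i j hij
    have hY : (Matrix.single j j (1 : ℝ))ᵀ = Matrix.single j j 1 := by
      ext a b
      simp [Matrix.transpose_apply, Matrix.single, and_comm]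
    have := congrFun (congrFun (key' _ hY) i) j
    rw [Matrix.mul_single_apply_same, Matrix.single_mul_apply_of_ne (c := (1:ℝ)) (i := j) (j := j) (a := i) (b := j) hij] at this
    simpa using this
  -- diagonal entries agree
  have hdiag : ∀ i : Fin n, M i i = M i0 i0 := by
    intro i
    rcases eq_or_ne i i0 with rfl | hii
    · rfl
    · set Y := Matrix.single i i0 (1 : ℝ) + Matrix.single i0 i 1 with hYdef
      have hY : Yᵀ = Y := by
        ext a b
        simp only [hYdef, Matrix.transpose_apply, Matrix.add_apply, Matrix.single]
        by_cases h1 : i = a <;> by_cases h2 : i0 = b <;> by_cases h3 : i0 = a <;>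
          by_cases h4 : i = b <;> simp_all
      have := congrFun (congrFun (key' Y hY) i) i0
      rw [hYdef, mul_add, add_mul] at this
      simp only [Matrix.add_apply] at this
      rw [Matrix.mul_single_apply_same,
        Matrix.mul_single_apply_of_ne (c := (1:ℝ)) (i := i0) (j := i) (a := i) (b := i0) (Ne.symm hii),
        Matrix.single_mul_apply_same,
        Matrix.single_mul_apply_of_ne (c := (1:ℝ)) (i := i0) (j := i) (a := i) (b := i0) hii] at this
      simpa using this
  set lam := M i0 i0 with hlam
  have hM : M = lam • (1 : Matrix (Fin n) (Fin n) ℝ) := by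
    ext i j
    rcases eq_or_ne i j with rfl | hij
    · simp [hdiag i, Matrix.one_apply]
    · simp [hoff i j hij, Matrix.one_apply_ne hij]
  have hSb_eq : Sb = lam • S := by
    have : M * S = Sb := by
      rw [hMdef, mul_assoc, Matrix.nonsing_inv_mul S hdet, mul_one]
    rw [← this, hM, smul_mul_assoc, one_mul]
  refine ⟨lam, ?_, hSb_eq⟩
  intro hl
  haveI : Nonempty (Fin n) := ⟨i0⟩
  rw [hl, zero_smul] at hSb_eq
  have : ¬ IsUnit Sb := by
    rw [hSb_eq]
    exact not_isUnit_zero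
  exact this hSb
end

section
/- Let ∇ be a linear connection on a vector space V (a map X ↦ ∇_X ∈ End(V)) and let g, ḡ be nondegenerate symmetric bilinear forms on V such that each ∇_X is skew-symmetric with respect to both g and ḡ. If every endomorphism of V that is g-skew-symmetric lies in the Lie algebra generated by {∇_X : X ∈ V} (full holonomy), then ḡ = λg for some nonzero λ ∈ ℝ. -/
attribute [local instance 100] LieRing.ofAssociativeRing

theorem full_holonomy_forces_proportional (V : Type*) [AddCommGroup V] [Module ℝ V]
    [FiniteDimensional ℝ V]
    (g gb : V →ₗ[ℝ] V →ₗ[ℝ] ℝ)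
    (hgsymm : ∀ x y, g x y = g y x) (hgbsymm : ∀ x y, gb x y = gb y x)
    (hgnd : ∀ x, (∀ y, g x y = 0) → x = 0)
    (hgbnd : ∀ x, (∀ y, gb x y = 0) → x = 0)
    (D : V → Module.End ℝ V)
    (hgskew : ∀ (X : V) (w u : V), g (D X w) u + g w (D X u) = 0)
    (hgbskew : ∀ (X : V) (w u : V), gb (D X w) u + gb w (D X u) = 0)
    (hfull : ∀ A : Module.End ℝ V, (∀ w u, g (A w) u + g w (A u) = 0) →
      A ∈ LieSubalgebra.lieSpan ℝ (Module.End ℝ V) (Set.range D)) :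
    ∃ lam : ℝ, lam ≠ 0 ∧ gb = lam • g := by
  -- Step 1: every g-skew endomorphism is gb-skew
  have key : ∀ A : Module.End ℝ V, (∀ w u, g (A w) u + g w (A u) = 0) →
      (∀ w u, gb (A w) u + gb w (A u) = 0) := by
    intro A hA
    let K : LieSubalgebra ℝ (Module.End ℝ V) :=
      { carrier := {B : Module.End ℝ V | ∀ w u, gb (B w) u + gb w (B u) = 0}
        add_mem' := by
          intro B C hB hC w u
          have h1 := hB w u
          have h2 := hC w u
          simp only [LinearMap.add_apply, map_add] at *
          linarith
        zero_mem' := by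
          intro w u
          simp
        smul_mem' := by
          intro c B hB w u
          have h1 := hB w u
          simp only [LinearMap.smul_apply, map_smul, smul_eq_mul] at *
          linear_combination c * h1
        lie_mem' := by
          intro B C hB hC w u
          simp only [Ring.lie_def, LinearMap.sub_apply, Module.End.mul_apply, map_sub] at *
          have h1 := hB (C w) u
          have h2 := hC w (B u)
          have h3 := hC (B w) u
          have h4 := hB w (C u)
          linarith }
    have hsub : Set.range D ⊆ ↑K := by
      rintro _ ⟨X, rfl⟩
      exact hgbskew X
    exact (LieSubalgebra.lieSpan_le.mpr hsub) (hfull A hA)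
  -- Step 2: the key bilinear identity from rank-2 skew maps
  have hstar : ∀ a b w u : V,
      g b w * gb a u - g a w * gb b u + g b u * gb a w - g a u * gb b w = 0 := by
    intro a b w u
    set A : Module.End ℝ V :=
      LinearMap.smulRight (g b) a - LinearMap.smulRight (g a) b with hAdef
    have hAapp : ∀ v : V, A v = g b v • a - g a v • b := by
      intro v
      simp [hAdef, LinearMap.sub_apply, LinearMap.smulRight_apply]
    have hAskew : ∀ w u, g (A w) u + g w (A u) = 0 := by
      intro w u
      rw [hAapp, hAapp]
      simp only [map_sub, map_smul, LinearMap.sub_apply, LinearMap.smul_apply, smul_eq_mul]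
      rw [hgsymm w a, hgsymm w b]
      ring
    have h := key A hAskew w u
    rw [hAapp, hAapp] at h
    simp only [map_sub, map_smul, LinearMap.sub_apply, LinearMap.smul_apply, smul_eq_mul] at h
    rw [hgbsymm w a, hgbsymm w b] at h
    linarith
  -- Step 3: proportionality of the two forms
  have prop : ∀ a u x y : V, gb a u * g x y = g a u * gb x y := by
    intro a u b w
    -- F x y z = gb x y * g b z - g x y * gb b z ; show F a u w = 0
    set F : V → V → V → ℝ := fun x y z => gb x y * g b z - g x y * gb b z with hF
    have sym : ∀ x y z, F x y z = F y x z := by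
      intro x y z
      simp only [hF]
      rw [hgbsymm x y, hgsymm x y]
    have anti : ∀ x y z, F x y z + F x z y = 0 := by
      intro x y z
      simp only [hF]
      linear_combination hstar x b z y
    have hzero : F a u w = 0 := by
      have c1 : F a u w = F u a w := sym a u w
      have c2 : F u a w = -F u w a := by linarith [anti u a w]
      have c3 : F u w a = F w u a := sym u w a
      have c4 : F w u a = -F w a u := by linarith [anti w u a]
      have c5 : F w a u = F a w u := sym w a u
      have c6 : F a w u = -F a u w := by linarith [anti a u w]
      linarith
    simp only [hF] at hzero
    linarith
  -- Conclusion
  by_cases htriv : ∀ x : V, x = 0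
  · refine ⟨1, one_ne_zero, ?_⟩
    ext x y
    rw [htriv x]
    simp
  · push_neg at htriv
    obtain ⟨x0, hx0⟩ := htriv
    have hy0 : ∃ y0, g x0 y0 ≠ 0 := by
      by_contra h
      push_neg at h
      exact hx0 (hgnd x0 h)
    obtain ⟨y0, hy0⟩ := hy0
    have hgb0 : gb x0 y0 ≠ 0 := by
      intro h0
      apply hx0
      apply hgbnd x0
      intro y
      have := prop x0 y x0 y0
      rw [h0, mul_zero] at this
      have hne := hy0
      -- gb x0 y * g x0 y0 = 0
      have : gb x0 y * g x0 y0 = 0 := this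
      rcases mul_eq_zero.mp this with h | h
      · exact h
      · exact absurd h hne
    refine ⟨gb x0 y0 / g x0 y0, div_ne_zero hgb0 hy0, ?_⟩
    ext a u
    have h := prop a u x0 y0
    simp only [LinearMap.smul_apply, smul_eq_mul]
    field_simp
    linarith
end

section
/- For invertible symmetric real n×n matrices S and S̄, if so(S) ⊆ so(S̄) (every matrix X with SX + XᵀS = 0 also satisfies S̄X + XᵀS̄ = 0), then S̄ = λS for some nonzero real λ. -/
open Matrix

lemma stdBasis_skew_aux {n : ℕ} (i j : Fin n) :
    (Matrix.single i j (1:ℝ) - Matrix.single j i 1)ᵀ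
      = -(Matrix.single i j (1:ℝ) - Matrix.single j i 1) := by
  ext a b
  simp only [Matrix.transpose_apply, Matrix.sub_apply, Matrix.neg_apply, neg_sub,
    Matrix.single, Matrix.of_apply]
  congr 1 <;> exact if_congr and_comm rfl rfl

theorem so_subset_implies_proportional (n : ℕ) (hn : 1 ≤ n)
    (S Sb : Matrix (Fin n) (Fin n) ℝ)
    (hS : IsUnit S) (hSb : IsUnit Sb) (hSsymm : S.IsSymm) (hSbsymm : Sb.IsSymm)
    (h : {X : Matrix (Fin n) (Fin n) ℝ | S * X + Xᵀ * S = 0} ⊆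
         {X : Matrix (Fin n) (Fin n) ℝ | Sb * X + Xᵀ * Sb = 0}) :
    ∃ lam : ℝ, lam ≠ 0 ∧ Sb = lam • S := by
  haveI : NeZero n := ⟨Nat.one_le_iff_ne_zero.mp hn⟩
  have hdet : IsUnit S.det := (Matrix.isUnit_iff_isUnit_det S).mp hS
  have hSS : S * S⁻¹ = 1 := Matrix.mul_nonsing_inv S hdet
  have hSiS : S⁻¹ * S = 1 := Matrix.nonsing_inv_mul S hdet
  have hSit : (S⁻¹)ᵀ = S⁻¹ := by
    rw [Matrix.transpose_nonsing_inv, hSsymm.eq]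
  set M := Sb * S⁻¹ with hM
  have hMt : Mᵀ = S⁻¹ * Sb := by
    rw [hM, Matrix.transpose_mul, hSit, hSbsymm.eq]
  have key : ∀ A : Matrix (Fin n) (Fin n) ℝ, Aᵀ = -A → M * A = A * Mᵀ := by
    intro A hA
    have hmem : S * (S⁻¹ * A) + (S⁻¹ * A)ᵀ * S = 0 := by
      rw [Matrix.transpose_mul, hSit, hA, ← mul_assoc, hSS, one_mul]
      have h4 : (-A) * S⁻¹ * S = -A := by rw [mul_assoc, hSiS, mul_one]
      rw [h4, add_neg_cancel]
    have h2 := h hmem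
    simp only [Set.mem_setOf_eq] at h2
    have h3 : M * A - A * Mᵀ = 0 := by
      rw [hMt, hM]
      calc Sb * S⁻¹ * A - A * (S⁻¹ * Sb)
          = Sb * (S⁻¹ * A) + (S⁻¹ * A)ᵀ * Sb := by
            rw [Matrix.transpose_mul, hSit, hA]; noncomm_ring
        _ = 0 := h2
    exact sub_eq_zero.mp h3
  -- main entry identity
  have main : ∀ i j k : Fin n, i ≠ j →
      M k i = (if k = i then M j j else 0) - (if k = j then M j i else 0) := by
    intro i j k hij
    have hji : j ≠ i := hij.symm
    have this1 := congrFun (congrFun (key _ (stdBasis_skew_aux i j)) k) j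
    rw [Matrix.mul_sub, Matrix.sub_mul] at this1
    simp only [Matrix.sub_apply] at this1
    rw [Matrix.mul_single_apply_same, mul_one,
      Matrix.mul_single_apply_of_ne _ _ _ _ _ hji, sub_zero] at this1
    by_cases hk1 : k = i
    · subst hk1
      rw [Matrix.single_mul_apply_same,
        Matrix.single_mul_apply_of_ne _ _ _ _ _ hij, one_mul, sub_zero] at this1
      rw [if_pos rfl, if_neg hij, sub_zero, this1]
      rfl
    · by_cases hk2 : k = j
      · subst hk2
        rw [Matrix.single_mul_apply_of_ne _ _ _ _ _ hk1,
          Matrix.single_mul_apply_same, one_mul, zero_sub] at this1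
        rw [if_neg hk1, if_pos rfl, zero_sub]
        rw [show Mᵀ i k = M k i from rfl] at this1
        exact this1
      · rw [Matrix.single_mul_apply_of_ne _ _ _ _ _ hk1,
          Matrix.single_mul_apply_of_ne _ _ _ _ _ hk2, sub_zero] at this1
        rw [if_neg hk1, if_neg hk2, sub_zero]
        linarith
  -- off-diagonal entries vanish
  have hoff : ∀ i k : Fin n, k ≠ i → M k i = 0 := by
    intro i k hki
    have h5 := main i k k (Ne.symm hki)
    rw [if_neg hki, if_pos rfl, zero_sub] at h5
    linarith
  -- diagonal entries equal
  have hdiag : ∀ i j : Fin n, M i i = M j j := by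
    intro i j
    by_cases hij : i = j
    · rw [hij]
    · have h6 := main i j i hij
      rwa [if_pos rfl, if_neg hij, sub_zero] at h6
  set lam := M 0 0 with hlam
  have hMeq : M = lam • (1 : Matrix (Fin n) (Fin n) ℝ) := by
    ext k l
    by_cases hkl : k = l
    · subst hkl
      simp [hlam, Matrix.smul_apply, Matrix.one_apply, hdiag k 0]
    · simp [Matrix.smul_apply, Matrix.one_apply, hkl, hoff l k hkl]
  have hSbeq : Sb = lam • S := by
    have h7 : Sb = M * S := by
      rw [hM, mul_assoc, hSiS, mul_one]
    rw [h7, hMeq, Matrix.smul_mul, one_mul]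
  refine ⟨lam, ?_, hSbeq⟩
  intro hlam0
  rw [hlam0, zero_smul] at hSbeq
  haveI : Nonempty (Fin n) := Fin.pos_iff_nonempty.mp hn
  exact not_isUnit_zero (hSbeq ▸ hSb)
end

section
/- The matrix S̄ = λS + μ P, where S is the 4×4 matrix with entries S₁₄=S₄₁=1, S₂₂=1, S₃₃=α (α>0), other entries zero, and P = e¹⊗e¹ is the matrix with P₁₁=1 and all other entries zero, satisfies: each Levi-Civita connection operator ∇_{eₘ} of S on the nilpotent Lie algebra with brackets [e₁,e₂]=e₃, [e₁,e₃]=e₄, is skew-symmetric with respect to S̄, i.e., S̄·∇_{eₘ} + ∇_{eₘ}ᵀ·S̄ = 0 for each m. -/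
open Matrix

/-- Structure constants of the 4-dimensional 3-step nilpotent Lie algebra of `G₄`:
nonzero brackets `[e₁,e₂]=e₃`, `[e₁,e₃]=e₄` (0-indexed: `[e₀,e₁]=e₂`, `[e₀,e₂]=e₃`). -/
def brG4 : Fin 4 → Fin 4 → Fin 4 → ℝ :=
  ![![![0,0,0,0], ![0,0,1,0], ![0,0,0,1], ![0,0,0,0]],
    ![![0,0,-1,0], ![0,0,0,0], ![0,0,0,0], ![0,0,0,0]],
    ![![0,0,0,-1], ![0,0,0,0], ![0,0,0,0], ![0,0,0,0]],
    ![![0,0,0,0], ![0,0,0,0], ![0,0,0,0], ![0,0,0,0]]]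

/-- The explicit Levi-Civita connection operators for the metric `S` on `G₄`. -/
noncomputable def NvalG4 (α : ℝ) : Fin 4 → Matrix (Fin 4) (Fin 4) ℝ :=
  ![!![0,0,0,0; 0,0,-α/2,0; -α⁻¹,1/2,0,0; 0,0,1,0],
    !![0,0,0,0; 0,0,0,0; -(1/2),0,0,0; 0,0,α/2,0],
    !![0,0,0,0; -α/2,0,0,0; 0,0,0,0; 0,α/2,0,0],
    !![0,0,0,0; 0,0,0,0; 0,0,0,0; 0,0,0,0]]

set_option maxHeartbeats 1600000 in
/-- The family `λS + μP` is parallel with respect to the Levi-Civita connection of `S`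
on the nilpotent Lie algebra of `G₄`. Here `N a c b` is the `c`-th component of
`∇_{e_a} e_b` determined by the Koszul formula. -/
theorem family_affinely_equivalent (α : ℝ) (hα : 0 < α) (lam mu : ℝ)
    (S P : Matrix (Fin 4) (Fin 4) ℝ)
    (hS : S = !![0,0,0,1; 0,1,0,0; 0,0,α,0; 1,0,0,0])
    (hP : P = !![1,0,0,0; 0,0,0,0; 0,0,0,0; 0,0,0,0])
    (N : Fin 4 → Matrix (Fin 4) (Fin 4) ℝ)
    (koszul : ∀ a b c : Fin 4,
      2 * (∑ d, N a d b * S d c) =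
        (∑ w, brG4 a b w * S w c) - (∑ w, brG4 b c w * S w a) +
          (∑ w, brG4 c a w * S w b)) :
    ∀ m : Fin 4, (lam • S + mu • P) * N m + (N m)ᵀ * (lam • S + mu • P) = 0 := by
  have hα' : α ≠ 0 := ne_of_gt hα
  subst hS hP
  have hN : ∀ a, N a = NvalG4 α a := by
    intro a
    ext i j
    have h0 := koszul a j 0
    have h1 := koszul a j 1
    have h2 := koszul a j 2
    have h3 := koszul a j 3
    fin_cases a <;> fin_cases j <;>
      simp only [brG4, Fin.sum_univ_four, Fin.isValue, Fin.reduceFinMk, Matrix.cons_val_zero,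
        Matrix.cons_val_one, Matrix.head_cons, Matrix.cons_val_two, Matrix.tail_cons,
        Matrix.cons_val_three, Matrix.head_fin_const, Matrix.cons_val', Matrix.empty_val',
        Matrix.cons_val_fin_one, Matrix.of_apply, mul_zero, mul_one, zero_mul, one_mul,
        add_zero, zero_add, neg_mul, zero_sub, sub_zero] at h0 h1 h2 h3 <;>
      fin_cases i <;>
      · simp only [NvalG4, Fin.isValue, Fin.reduceFinMk, Matrix.cons_val_zero,
          Matrix.cons_val_one, Matrix.head_cons, Matrix.cons_val_two, Matrix.tail_cons,
          Matrix.cons_val_three, Matrix.head_fin_const, Matrix.cons_val', Matrix.empty_val',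
          Matrix.cons_val_fin_one, Matrix.of_apply]
        first
          | linarith
          | ((try field_simp at h0 h1 h2 h3 ⊢) <;>
              first
                | linarith
                | nlinarith [h0, h1, h2, h3, sq_nonneg α, hα])
  intro m
  rw [hN]
  ext i j
  fin_cases m <;> fin_cases i <;> fin_cases j <;>
    · simp only [NvalG4, Matrix.add_apply, Matrix.mul_apply, Matrix.transpose_apply,
        Matrix.smul_apply, Fin.sum_univ_four, Fin.isValue, Fin.reduceFinMk, Matrix.cons_val_zero,
        Matrix.cons_val_one, Matrix.head_cons, Matrix.cons_val_two, Matrix.tail_cons,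
        Matrix.cons_val_three, Matrix.head_fin_const, Matrix.cons_val', Matrix.empty_val',
        Matrix.cons_val_fin_one, Matrix.of_apply, Matrix.zero_apply, smul_eq_mul]
      try field_simp
      try ring_nf
end

section
/- On the 4-dimensional Lie algebra with nonzero brackets [e₁,e₃]=e₁, [e₂,e₃]=e₂, equipped with the Riemannian metric S with S₁₁=S₂₂=S₄₄=1, S₃₃=α>0, S₁₄=S₄₁=β with 0<β<1, and other entries zero, any symmetric 4×4 matrix S̄ satisfying S̄·∇_{eₘ} + ∇_{eₘ}ᵀ·S̄ = 0 for all m = 1,…,4 (where ∇_{eₘ} are the Levi-Civita connection operators of S) is a scalar multiple of S. -/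
open Matrix

/-- Structure constants of the Lie algebra of `ℝH³ × ℝ⁺`:
nonzero brackets `[e₁,e₃]=e₁`, `[e₂,e₃]=e₂` (0-indexed: `[e₀,e₂]=e₀`, `[e₁,e₂]=e₁`). -/
def brRH3 : Fin 4 → Fin 4 → Fin 4 → ℝ :=
  ![![![0,0,0,0], ![0,0,0,0], ![1,0,0,0], ![0,0,0,0]],
    ![![0,0,0,0], ![0,0,0,0], ![0,1,0,0], ![0,0,0,0]],
    ![![-1,0,0,0], ![0,-1,0,0], ![0,0,0,0], ![0,0,0,0]],
    ![![0,0,0,0], ![0,0,0,0], ![0,0,0,0], ![0,0,0,0]]]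

set_option maxHeartbeats 1600000 in
/-- The metric with `S₁₁=S₂₂=S₄₄=1`, `S₃₃=α>0`, `S₁₄=S₄₁=β`, `0<β<1`, on `ℝH³ × ℝ⁺`
is invariantly rigid: every symmetric matrix parallel for its Levi-Civita connection
is a scalar multiple of `S`. Here `N a c b` is the `c`-th component of `∇_{e_a} e_b`. -/
theorem rh3_metric_invariantly_rigid (α β : ℝ) (hα : 0 < α) (hβ0 : 0 < β) (hβ1 : β < 1)
    (S : Matrix (Fin 4) (Fin 4) ℝ)
    (hS : S = !![1,0,0,β; 0,1,0,0; 0,0,α,0; β,0,0,1])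
    (N : Fin 4 → Matrix (Fin 4) (Fin 4) ℝ)
    (koszul : ∀ a b c : Fin 4,
      2 * (∑ d, N a d b * S d c) =
        (∑ w, brRH3 a b w * S w c) - (∑ w, brRH3 b c w * S w a) +
          (∑ w, brRH3 c a w * S w b))
    (Sb : Matrix (Fin 4) (Fin 4) ℝ) (hSb : Sb.IsSymm)
    (h : ∀ m : Fin 4, Sb * N m + (N m)ᵀ * Sb = 0) :
    ∃ lam : ℝ, Sb = lam • S := by
  subst hS
  have hαne : α ≠ 0 := ne_of_gt hα
  have hβne : β ≠ 0 := ne_of_gt hβ0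
  have hb2 : (1:ℝ) - β^2 ≠ 0 := by nlinarith
  have h2b : (2*(1-β^2) : ℝ) ≠ 0 := by nlinarith
  have h2a : (2*α : ℝ) ≠ 0 := by positivity
  have htwo : (2:ℝ) ≠ 0 := two_ne_zero
  have hN0 : N 0 = !![(0)/(2*(1-β^2)), (0)/(2*(1-β^2)), (2-β^2)/(2*(1-β^2)), (0)/(2*(1-β^2));
      (0)/2, (0)/2, (0)/2, (0)/2;
      (-2)/(2*α), (0)/(2*α), (0)/(2*α), (-β)/(2*α);
      (0)/(2*(1-β^2)), (0)/(2*(1-β^2)), (-β)/(2*(1-β^2)), (0)/(2*(1-β^2))] := by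
    have k00 := koszul 0 0 0
    have k01 := koszul 0 0 1
    have k02 := koszul 0 0 2
    have k03 := koszul 0 0 3
    have k10 := koszul 0 1 0
    have k11 := koszul 0 1 1
    have k12 := koszul 0 1 2
    have k13 := koszul 0 1 3
    have k20 := koszul 0 2 0
    have k21 := koszul 0 2 1
    have k22 := koszul 0 2 2
    have k23 := koszul 0 2 3
    have k30 := koszul 0 3 0
    have k31 := koszul 0 3 1
    have k32 := koszul 0 3 2
    have k33 := koszul 0 3 3
    simp only [brRH3, Fin.sum_univ_four, Matrix.cons_val', Matrix.cons_val_zero, Matrix.cons_val_one,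
      Matrix.head_cons, Matrix.empty_val', Matrix.cons_val_fin_one, Matrix.head_fin_const,
      Matrix.cons_val_two, Matrix.cons_val_three, Matrix.vecHead, Matrix.vecTail, Matrix.of_apply,
      Function.comp_apply, Fin.succ_zero_eq_one, Fin.succ_one_eq_two,
      mul_zero, zero_mul, mul_one, one_mul, add_zero, zero_add, sub_zero, zero_sub, sub_self,
      neg_zero, neg_mul, neg_neg] at k00 k01 k02 k03 k10 k11 k12 k13 k20 k21 k22 k23 k30 k31 k32 k33
    ext d b
    fin_cases d <;> fin_cases b <;>
      simp only [Fin.zero_eta, Fin.mk_one, Fin.reduceFinMk, Matrix.cons_val', Matrix.cons_val_zero,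
        Matrix.cons_val_one, Matrix.head_cons, Matrix.empty_val', Matrix.cons_val_fin_one,
        Matrix.head_fin_const, Matrix.cons_val_two, Matrix.cons_val_three, Matrix.vecHead,
        Matrix.vecTail, Matrix.of_apply, Function.comp_apply, Fin.succ_zero_eq_one, Fin.succ_one_eq_two]
    · rw [eq_div_iff h2b]; linear_combination k00 - β * k03
    · rw [eq_div_iff h2b]; linear_combination k10 - β * k13
    · rw [eq_div_iff h2b]; linear_combination k20 - β * k23
    · rw [eq_div_iff h2b]; linear_combination k30 - β * k33
    · rw [eq_div_iff htwo]; linear_combination k01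
    · rw [eq_div_iff htwo]; linear_combination k11
    · rw [eq_div_iff htwo]; linear_combination k21
    · rw [eq_div_iff htwo]; linear_combination k31
    · rw [eq_div_iff h2a]; linear_combination k02
    · rw [eq_div_iff h2a]; linear_combination k12
    · rw [eq_div_iff h2a]; linear_combination k22
    · rw [eq_div_iff h2a]; linear_combination k32
    · rw [eq_div_iff h2b]; linear_combination k03 - β * k00
    · rw [eq_div_iff h2b]; linear_combination k13 - β * k10
    · rw [eq_div_iff h2b]; linear_combination k23 - β * k20
    · rw [eq_div_iff h2b]; linear_combination k33 - β * k30
  have hN1 : N 1 = !![(0)/(2*(1-β^2)), (0)/(2*(1-β^2)), (0)/(2*(1-β^2)), (0)/(2*(1-β^2));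
      (0)/2, (0)/2, (2)/2, (0)/2;
      (0)/(2*α), (-2)/(2*α), (0)/(2*α), (0)/(2*α);
      (0)/(2*(1-β^2)), (0)/(2*(1-β^2)), (0)/(2*(1-β^2)), (0)/(2*(1-β^2))] := by
    have k00 := koszul 1 0 0
    have k01 := koszul 1 0 1
    have k02 := koszul 1 0 2
    have k03 := koszul 1 0 3
    have k10 := koszul 1 1 0
    have k11 := koszul 1 1 1
    have k12 := koszul 1 1 2
    have k13 := koszul 1 1 3
    have k20 := koszul 1 2 0
    have k21 := koszul 1 2 1
    have k22 := koszul 1 2 2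
    have k23 := koszul 1 2 3
    have k30 := koszul 1 3 0
    have k31 := koszul 1 3 1
    have k32 := koszul 1 3 2
    have k33 := koszul 1 3 3
    simp only [brRH3, Fin.sum_univ_four, Matrix.cons_val', Matrix.cons_val_zero, Matrix.cons_val_one,
      Matrix.head_cons, Matrix.empty_val', Matrix.cons_val_fin_one, Matrix.head_fin_const,
      Matrix.cons_val_two, Matrix.cons_val_three, Matrix.vecHead, Matrix.vecTail, Matrix.of_apply,
      Function.comp_apply, Fin.succ_zero_eq_one, Fin.succ_one_eq_two,
      mul_zero, zero_mul, mul_one, one_mul, add_zero, zero_add, sub_zero, zero_sub, sub_self,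
      neg_zero, neg_mul, neg_neg] at k00 k01 k02 k03 k10 k11 k12 k13 k20 k21 k22 k23 k30 k31 k32 k33
    ext d b
    fin_cases d <;> fin_cases b <;>
      simp only [Fin.zero_eta, Fin.mk_one, Fin.reduceFinMk, Matrix.cons_val', Matrix.cons_val_zero,
        Matrix.cons_val_one, Matrix.head_cons, Matrix.empty_val', Matrix.cons_val_fin_one,
        Matrix.head_fin_const, Matrix.cons_val_two, Matrix.cons_val_three, Matrix.vecHead,
        Matrix.vecTail, Matrix.of_apply, Function.comp_apply, Fin.succ_zero_eq_one, Fin.succ_one_eq_two]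
    · rw [eq_div_iff h2b]; linear_combination k00 - β * k03
    · rw [eq_div_iff h2b]; linear_combination k10 - β * k13
    · rw [eq_div_iff h2b]; linear_combination k20 - β * k23
    · rw [eq_div_iff h2b]; linear_combination k30 - β * k33
    · rw [eq_div_iff htwo]; linear_combination k01
    · rw [eq_div_iff htwo]; linear_combination k11
    · rw [eq_div_iff htwo]; linear_combination k21
    · rw [eq_div_iff htwo]; linear_combination k31
    · rw [eq_div_iff h2a]; linear_combination k02
    · rw [eq_div_iff h2a]; linear_combination k12
    · rw [eq_div_iff h2a]; linear_combination k22
    · rw [eq_div_iff h2a]; linear_combination k32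
    · rw [eq_div_iff h2b]; linear_combination k03 - β * k00
    · rw [eq_div_iff h2b]; linear_combination k13 - β * k10
    · rw [eq_div_iff h2b]; linear_combination k23 - β * k20
    · rw [eq_div_iff h2b]; linear_combination k33 - β * k30
  have hN2 : N 2 = !![(β^2)/(2*(1-β^2)), (0)/(2*(1-β^2)), (0)/(2*(1-β^2)), (β)/(2*(1-β^2));
      (0)/2, (0)/2, (0)/2, (0)/2;
      (0)/(2*α), (0)/(2*α), (0)/(2*α), (0)/(2*α);
      (-β)/(2*(1-β^2)), (0)/(2*(1-β^2)), (0)/(2*(1-β^2)), (-β^2)/(2*(1-β^2))] := by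
    have k00 := koszul 2 0 0
    have k01 := koszul 2 0 1
    have k02 := koszul 2 0 2
    have k03 := koszul 2 0 3
    have k10 := koszul 2 1 0
    have k11 := koszul 2 1 1
    have k12 := koszul 2 1 2
    have k13 := koszul 2 1 3
    have k20 := koszul 2 2 0
    have k21 := koszul 2 2 1
    have k22 := koszul 2 2 2
    have k23 := koszul 2 2 3
    have k30 := koszul 2 3 0
    have k31 := koszul 2 3 1
    have k32 := koszul 2 3 2
    have k33 := koszul 2 3 3
    simp only [brRH3, Fin.sum_univ_four, Matrix.cons_val', Matrix.cons_val_zero, Matrix.cons_val_one,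
      Matrix.head_cons, Matrix.empty_val', Matrix.cons_val_fin_one, Matrix.head_fin_const,
      Matrix.cons_val_two, Matrix.cons_val_three, Matrix.vecHead, Matrix.vecTail, Matrix.of_apply,
      Function.comp_apply, Fin.succ_zero_eq_one, Fin.succ_one_eq_two,
      mul_zero, zero_mul, mul_one, one_mul, add_zero, zero_add, sub_zero, zero_sub, sub_self,
      neg_zero, neg_mul, neg_neg] at k00 k01 k02 k03 k10 k11 k12 k13 k20 k21 k22 k23 k30 k31 k32 k33
    ext d b
    fin_cases d <;> fin_cases b <;>
      simp only [Fin.zero_eta, Fin.mk_one, Fin.reduceFinMk, Matrix.cons_val', Matrix.cons_val_zero,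
        Matrix.cons_val_one, Matrix.head_cons, Matrix.empty_val', Matrix.cons_val_fin_one,
        Matrix.head_fin_const, Matrix.cons_val_two, Matrix.cons_val_three, Matrix.vecHead,
        Matrix.vecTail, Matrix.of_apply, Function.comp_apply, Fin.succ_zero_eq_one, Fin.succ_one_eq_two]
    · rw [eq_div_iff h2b]; linear_combination k00 - β * k03
    · rw [eq_div_iff h2b]; linear_combination k10 - β * k13
    · rw [eq_div_iff h2b]; linear_combination k20 - β * k23
    · rw [eq_div_iff h2b]; linear_combination k30 - β * k33
    · rw [eq_div_iff htwo]; linear_combination k01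
    · rw [eq_div_iff htwo]; linear_combination k11
    · rw [eq_div_iff htwo]; linear_combination k21
    · rw [eq_div_iff htwo]; linear_combination k31
    · rw [eq_div_iff h2a]; linear_combination k02
    · rw [eq_div_iff h2a]; linear_combination k12
    · rw [eq_div_iff h2a]; linear_combination k22
    · rw [eq_div_iff h2a]; linear_combination k32
    · rw [eq_div_iff h2b]; linear_combination k03 - β * k00
    · rw [eq_div_iff h2b]; linear_combination k13 - β * k10
    · rw [eq_div_iff h2b]; linear_combination k23 - β * k20
    · rw [eq_div_iff h2b]; linear_combination k33 - β * k30
  have hN3 : N 3 = !![(0)/(2*(1-β^2)), (0)/(2*(1-β^2)), (β)/(2*(1-β^2)), (0)/(2*(1-β^2));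
      (0)/2, (0)/2, (0)/2, (0)/2;
      (-β)/(2*α), (0)/(2*α), (0)/(2*α), (0)/(2*α);
      (0)/(2*(1-β^2)), (0)/(2*(1-β^2)), (-β^2)/(2*(1-β^2)), (0)/(2*(1-β^2))] := by
    have k00 := koszul 3 0 0
    have k01 := koszul 3 0 1
    have k02 := koszul 3 0 2
    have k03 := koszul 3 0 3
    have k10 := koszul 3 1 0
    have k11 := koszul 3 1 1
    have k12 := koszul 3 1 2
    have k13 := koszul 3 1 3
    have k20 := koszul 3 2 0
    have k21 := koszul 3 2 1
    have k22 := koszul 3 2 2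
    have k23 := koszul 3 2 3
    have k30 := koszul 3 3 0
    have k31 := koszul 3 3 1
    have k32 := koszul 3 3 2
    have k33 := koszul 3 3 3
    simp only [brRH3, Fin.sum_univ_four, Matrix.cons_val', Matrix.cons_val_zero, Matrix.cons_val_one,
      Matrix.head_cons, Matrix.empty_val', Matrix.cons_val_fin_one, Matrix.head_fin_const,
      Matrix.cons_val_two, Matrix.cons_val_three, Matrix.vecHead, Matrix.vecTail, Matrix.of_apply,
      Function.comp_apply, Fin.succ_zero_eq_one, Fin.succ_one_eq_two,
      mul_zero, zero_mul, mul_one, one_mul, add_zero, zero_add, sub_zero, zero_sub, sub_self,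
      neg_zero, neg_mul, neg_neg] at k00 k01 k02 k03 k10 k11 k12 k13 k20 k21 k22 k23 k30 k31 k32 k33
    ext d b
    fin_cases d <;> fin_cases b <;>
      simp only [Fin.zero_eta, Fin.mk_one, Fin.reduceFinMk, Matrix.cons_val', Matrix.cons_val_zero,
        Matrix.cons_val_one, Matrix.head_cons, Matrix.empty_val', Matrix.cons_val_fin_one,
        Matrix.head_fin_const, Matrix.cons_val_two, Matrix.cons_val_three, Matrix.vecHead,
        Matrix.vecTail, Matrix.of_apply, Function.comp_apply, Fin.succ_zero_eq_one, Fin.succ_one_eq_two]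
    · rw [eq_div_iff h2b]; linear_combination k00 - β * k03
    · rw [eq_div_iff h2b]; linear_combination k10 - β * k13
    · rw [eq_div_iff h2b]; linear_combination k20 - β * k23
    · rw [eq_div_iff h2b]; linear_combination k30 - β * k33
    · rw [eq_div_iff htwo]; linear_combination k01
    · rw [eq_div_iff htwo]; linear_combination k11
    · rw [eq_div_iff htwo]; linear_combination k21
    · rw [eq_div_iff htwo]; linear_combination k31
    · rw [eq_div_iff h2a]; linear_combination k02
    · rw [eq_div_iff h2a]; linear_combination k12
    · rw [eq_div_iff h2a]; linear_combination k22
    · rw [eq_div_iff h2a]; linear_combination k32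
    · rw [eq_div_iff h2b]; linear_combination k03 - β * k00
    · rw [eq_div_iff h2b]; linear_combination k13 - β * k10
    · rw [eq_div_iff h2b]; linear_combination k23 - β * k20
    · rw [eq_div_iff h2b]; linear_combination k33 - β * k30
  have H1 := h 1
  rw [hN1] at H1
  have H0 := h 0
  rw [hN0] at H0
  have H2 := h 2
  rw [hN2] at H2
  have E101 := congrFun (congrFun H1 0) 1
  have E102 := congrFun (congrFun H1 0) 2
  have E111 := congrFun (congrFun H1 1) 1
  have E113 := congrFun (congrFun H1 1) 3
  have E132 := congrFun (congrFun H1 3) 2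
  have E112 := congrFun (congrFun H1 1) 2
  have E002 := congrFun (congrFun H0 0) 2
  have E200 := congrFun (congrFun H2 0) 0
  have E203 := congrFun (congrFun H2 0) 3
  have h21 := hSb.apply 1 2
  have h13 := hSb.apply 3 1
  have h30 := hSb.apply 0 3
  simp only [Matrix.add_apply, Matrix.mul_apply, Matrix.transpose_apply, Matrix.zero_apply,
    Fin.sum_univ_four, Matrix.cons_val', Matrix.cons_val_zero, Matrix.cons_val_one,
    Matrix.head_cons, Matrix.empty_val', Matrix.cons_val_fin_one, Matrix.head_fin_const,
    Matrix.cons_val_two, Matrix.cons_val_three, Matrix.vecHead, Matrix.vecTail, Matrix.of_apply,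
    Function.comp_apply, Fin.succ_zero_eq_one, Fin.succ_one_eq_two,
    mul_zero, zero_mul, mul_one, one_mul, add_zero, zero_add, sub_zero, zero_sub, sub_self,
    neg_zero, neg_mul, neg_neg, zero_div] at E101 E102 E111 E113 E132 E112 E002 E200 E203
  field_simp at E101 E102 E111 E113 E132 E112 E002 E200 E203
  rw [h21] at E111
  rw [h30] at E200
  have s02 : Sb 0 2 = 0 := by linarith
  have s23 : Sb 2 3 = 0 := by linarith
  have s12 : Sb 1 2 = 0 := by
    have e : Sb 1 2 * (8*α) = 0 := by linear_combination (-4*α) * E111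
    exact (mul_eq_zero.mp e).resolve_right (by positivity)
  have s03 : Sb 0 3 = β * Sb 0 0 := by
    have e : β * Sb 0 3 = β * (β * Sb 0 0) := by linear_combination (-1/2) * E200
    exact mul_left_cancel₀ hβne e
  have s33 : Sb 3 3 = Sb 0 0 := by
    have e : β * Sb 3 3 = β * Sb 0 0 := by linear_combination -E203
    exact mul_left_cancel₀ hβne e
  have s22 : Sb 2 2 = α * Sb 0 0 := by
    have e : Sb 2 2 * (4*(1-β^2)) = (α * Sb 0 0) * (4*(1-β^2)) := by
      linear_combination (-2) * E002 + (-2*α*β) * s03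
    exact mul_right_cancel₀ (by nlinarith : (4*(1-β^2):ℝ) ≠ 0) e
  have s11 : Sb 1 1 = Sb 0 0 := by
    have e : α * Sb 1 1 = α * Sb 0 0 := by linear_combination E112 + s22
    exact mul_left_cancel₀ hαne e
  refine ⟨Sb 0 0, ?_⟩
  ext i j
  fin_cases i <;> fin_cases j <;>
    simp only [Matrix.smul_apply, smul_eq_mul, Matrix.cons_val', Matrix.cons_val_zero,
      Matrix.cons_val_one, Matrix.head_cons, Matrix.empty_val', Matrix.cons_val_fin_one,
      Matrix.head_fin_const, Matrix.cons_val_two, Matrix.cons_val_three, Matrix.vecHead,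
      Matrix.vecTail, Matrix.of_apply, Function.comp_apply, Fin.succ_zero_eq_one,
      Fin.succ_one_eq_two, Fin.zero_eta, Fin.mk_one, Fin.reduceFinMk]
  · ring
  · linear_combination E102
  · linear_combination s02
  · linear_combination s03
  · linear_combination hSb.apply 0 1 + E102
  · linear_combination s11
  · linear_combination s12
  · linear_combination h13 + E132
  · linear_combination hSb.apply 0 2 + s02
  · linear_combination h21 + s12
  · linear_combination s22
  · linear_combination s23
  · linear_combination h30 + s03
  · linear_combination E132
  · linear_combination hSb.apply 2 3 + s23
  · linear_combination s33
end

section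
/- Let S be an invertible symmetric real n×n matrix and let W ⊆ Matₙ(ℝ) be any subset of so(S) = {X : SX + XᵀS = 0}. Then aff(W) := {S̄ symmetric : S̄X + XᵀS̄ = 0 for all X ∈ W} is a linear subspace of symmetric matrices containing S, and it is closed under the map S̄ ↦ S̄ S⁻¹ S̄. -/
open Matrix

/-- The space of symmetric bilinear forms parallel with respect to a set `W`
of connection operators: `aff(W) = {S̄ symmetric | S̄X + XᵀS̄ = 0 for all X ∈ W}`. -/
def affSet (n : ℕ) (W : Set (Matrix (Fin n) (Fin n) ℝ)) : Set (Matrix (Fin n) (Fin n) ℝ) :=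
  {Sb | Sb.IsSymm ∧ ∀ X ∈ W, Sb * X + Xᵀ * Sb = 0}

theorem aff_subspace_and_closed (n : ℕ) (S : Matrix (Fin n) (Fin n) ℝ)
    (hS : IsUnit S) (hsymm : S.IsSymm)
    (W : Set (Matrix (Fin n) (Fin n) ℝ))
    (hW : W ⊆ {X : Matrix (Fin n) (Fin n) ℝ | S * X + Xᵀ * S = 0}) :
    S ∈ affSet n W ∧
    (0 : Matrix (Fin n) (Fin n) ℝ) ∈ affSet n W ∧
    (∀ A ∈ affSet n W, ∀ B ∈ affSet n W, A + B ∈ affSet n W) ∧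
    (∀ (c : ℝ), ∀ A ∈ affSet n W, c • A ∈ affSet n W) ∧
    (∀ A ∈ affSet n W, A * S⁻¹ * A ∈ affSet n W) := by
  have hdet : IsUnit S.det := (Matrix.isUnit_iff_isUnit_det S).mp hS
  have hSinv : S⁻¹ * S = 1 := Matrix.nonsing_inv_mul S hdet
  have hSinv' : S * S⁻¹ = 1 := Matrix.mul_nonsing_inv S hdet
  have hSinvSymm : (S⁻¹)ᵀ = S⁻¹ := by
    rw [Matrix.transpose_nonsing_inv, Matrix.IsSymm.eq hsymm]
  refine ⟨⟨hsymm, fun X hX => hW hX⟩, ⟨Matrix.isSymm_zero, by simp⟩, ?_, ?_, ?_⟩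
  · rintro A ⟨hA1, hA2⟩ B ⟨hB1, hB2⟩
    refine ⟨hA1.add hB1, fun X hX => ?_⟩
    have := hA2 X hX
    have := hB2 X hX
    have : (A * X + Xᵀ * A) + (B * X + Xᵀ * B) = 0 := by rw [hA2 X hX, hB2 X hX]; simp
    linear_combination (norm := noncomm_ring) this
  · rintro c A ⟨hA1, hA2⟩
    refine ⟨by rw [Matrix.IsSymm, Matrix.transpose_smul, hA1], fun X hX => ?_⟩
    rw [Matrix.smul_mul, Matrix.mul_smul, ← smul_add, hA2 X hX, smul_zero]
  · rintro A ⟨hA1, hA2⟩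
    refine ⟨?_, fun X hX => ?_⟩
    · rw [Matrix.IsSymm, Matrix.transpose_mul, Matrix.transpose_mul, hSinvSymm,
        Matrix.IsSymm.eq hA1, Matrix.mul_assoc]
    · have hAX : A * X = -(Xᵀ * A) := eq_neg_of_add_eq_zero_left (hA2 X hX)
      have hSX : Xᵀ * S = -(S * X) := eq_neg_of_add_eq_zero_right (hW hX)
      have key : S⁻¹ * Xᵀ = -(X * S⁻¹) := by
        have h1 : S⁻¹ * (Xᵀ * S) * S⁻¹ = S⁻¹ * (-(S * X)) * S⁻¹ := by rw [hSX]
        calc S⁻¹ * Xᵀ = S⁻¹ * (Xᵀ * S) * S⁻¹ := by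
              rw [← Matrix.mul_assoc, Matrix.mul_assoc (S⁻¹ * Xᵀ), hSinv', Matrix.mul_one]
          _ = S⁻¹ * (-(S * X)) * S⁻¹ := by rw [hSX]
          _ = -(X * S⁻¹) := by
              rw [Matrix.mul_neg, ← Matrix.mul_assoc, hSinv, Matrix.one_mul, Matrix.neg_mul]
      have : A * S⁻¹ * A * X = -(Xᵀ * (A * S⁻¹ * A)) := by
        calc A * S⁻¹ * A * X = A * (S⁻¹ * Xᵀ) * (-A) := by
              rw [Matrix.mul_assoc (A * S⁻¹), hAX]
              rw [Matrix.mul_neg, Matrix.mul_neg, Matrix.mul_assoc A, Matrix.mul_assoc A,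
                Matrix.mul_assoc S⁻¹]
          _ = A * X * S⁻¹ * A := by
              rw [key]; noncomm_ring
          _ = -(Xᵀ * (A * S⁻¹ * A)) := by
              rw [hAX]
              rw [Matrix.neg_mul, Matrix.neg_mul]
              rw [Matrix.mul_assoc, Matrix.mul_assoc, Matrix.mul_assoc]
      rw [this]; simp
end

section
/- Let V be a finite-dimensional real vector space with nondegenerate symmetric bilinear form g and v ∈ V null (g(v,v)=0), v ≠ 0. Then for any λ ≠ 0 and any μ ∈ ℝ, the bilinear form ḡ = λ g + μ v*⊗v* is nondegenerate, and v is null for ḡ as well. -/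
theorem nondegenerate_null_case (V : Type*) [AddCommGroup V] [Module ℝ V]
    [FiniteDimensional ℝ V]
    (g : V →ₗ[ℝ] V →ₗ[ℝ] ℝ)
    (hsymm : ∀ x y, g x y = g y x)
    (hnd : ∀ x, (∀ y, g x y = 0) → x = 0)
    (v : V) (hv0 : v ≠ 0) (hnull : g v v = 0)
    (lam mu : ℝ) (hlam : lam ≠ 0) :
    (∀ w, (∀ u, lam * g w u + mu * g v w * g v u = 0) → w = 0) ∧
    lam * g v v + mu * g v v * g v v = 0 := by
  constructor
  · intro w hw
    have hv : lam * g w v + mu * g v w * g v v = 0 := hw v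
    rw [hnull, mul_zero, add_zero] at hv
    have hwv : g w v = 0 := by
      rcases mul_eq_zero.mp hv with h | h
      · exact absurd h hlam
      · exact h
    have hvw : g v w = 0 := by rw [hsymm v w, hwv]
    apply hnd
    intro u
    have := hw u
    rw [hvw, mul_zero, zero_mul, add_zero] at this
    rcases mul_eq_zero.mp this with h | h
    · exact absurd h hlam
    · exact h
  · rw [hnull]; ring
end
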